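/- Let $k,d \in \mathbb{N}$ with $k<d$, let $\gamma = (\gamma_0,\ldots,\gamma_{2d}) \in \mathbb{R}^{2d+1}$ with moment matrix $M_d$, let $x_1,\ldots,x_k$ be distinct real numbers with $f(x) = \prod_{i=1}^k (x-x_i) = \sum_{i=0}^k (-1)^i e_i x^{k-i}$, and let $B_k$ be the matrix with entries $(B_k)_{ij} = (-1)^{k+i-j} e_{k+i-j}$ for $i \le j \le i+k$ and $0$ otherwise. Then $B_k M_d B_k^T = \sum_{i=0}^{k} (-1)^i e_i\, \mathcal{H}_{x^{k-i} f(x)}(d-k)$, where $\mathcal{H}_{g}(\ell)$ is the $(\ell+1)\times(\ell+1)$ localizing moment matrix with entries $L(g(x)\, x^{i+j-2})$. -/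

import Mathlib

/-!
Both sides equal `L(f² x^(i+j-2))`. Row `i` of `B_k` is the coefficient vector of `x^(i-1) f`,
so the `(i, j)` entry of `B_k M_d B_kᵀ` is the Hankel form `L((x^(i-1) f)(x^(j-1) f))`. On the
other side `g ↦ H_g` is linear, and Vieta's formula `f = ∑ (-1)^m e_m x^(k-m)` collapses the sum
to `H_{f·f}`.
-/

open Polynomial

/-- `m`-th elementary symmetric polynomial of `x 1, ..., x k` (1-based indices). -/
noncomputable def esymm (k m : ℕ) (x : ℕ → ℝ) : ℝ :=
  ∑ t ∈ (Finset.Icc 1 k).powersetCard m, ∏ i ∈ t, x i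

/-- The Riesz functional of a sequence `γ`: it sends `x^m ↦ γ m`. -/
noncomputable def riesz (γ : ℕ → ℝ) (p : Polynomial ℝ) : ℝ :=
  ∑ m ∈ p.support, p.coeff m * γ m

/-- The matrix `B_k` (1-based encoding). -/
noncomputable def Bmat (k : ℕ) (x : ℕ → ℝ) : ℕ → ℕ → ℝ :=
  fun i j =>
    if i ≤ j ∧ j ≤ i + k then (-1 : ℝ) ^ (k + i - j) * esymm k (k + i - j) x
    else 0

/-- The localizing moment matrix `H_g(ℓ)` of `γ`, with (1-based) entries
`L(g(x) x^{i+j-2})` for `1 ≤ i, j ≤ ℓ + 1`. -/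
noncomputable def locMat (γ : ℕ → ℝ) (g : Polynomial ℝ) : ℕ → ℕ → ℝ :=
  fun i j => riesz γ (g * X ^ (i + j - 2))

open Finset

noncomputable def rieszLinear (γ : ℕ → ℝ) : ℝ[X] →ₗ[ℝ] ℝ :=
  lsum fun m => LinearMap.mulRight ℝ (γ m)

lemma rieszLinear_apply (γ : ℕ → ℝ) (p : ℝ[X]) : rieszLinear γ p = riesz γ p := rfl

lemma riesz_monomial (γ : ℕ → ℝ) (n : ℕ) (c : ℝ) : riesz γ (monomial n c) = c * γ n := by
  rw [← rieszLinear_apply, rieszLinear, lsum_apply, sum_monomial_index] <;> simp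

lemma riesz_mul_eq_sum (γ : ℕ → ℝ) (p q : ℝ[X]) {N : ℕ} (hp : p.natDegree < N)
    (hq : q.natDegree < N) :
    riesz γ (p * q) = ∑ a ∈ range N, ∑ b ∈ range N, p.coeff a * γ (a + b) * q.coeff b := by
  conv_lhs => rw [p.as_sum_range' N hp, q.as_sum_range' N hq, sum_mul_sum]
  rw [← rieszLinear_apply, map_sum]
  refine sum_congr rfl fun a _ => ?_
  rw [map_sum]
  exact sum_congr rfl fun b _ => by
    rw [monomial_mul_monomial, rieszLinear_apply, riesz_monomial]; ring

lemma sum_mul_locMat (γ : ℕ → ℝ) {ι : Type*} (s : Finset ι) (c : ι → ℝ) (g : ι → ℝ[X])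
    (i j : ℕ) :
    ∑ m ∈ s, c m * locMat γ (g m) i j = locMat γ (∑ m ∈ s, C (c m) * g m) i j := by
  simp only [locMat, ← rieszLinear_apply, sum_mul, map_sum, ← smul_eq_C_mul,
    smul_mul_assoc, map_smul, smul_eq_mul]

lemma prod_X_sub_C_eq_multiset_prod (k : ℕ) (x : ℕ → ℝ) :
    ∏ i ∈ Icc 1 k, (X - C (x i)) = (((Icc 1 k).val.map x).map fun t => X - C t).prod := by
  rw [Multiset.map_map]
  rfl

lemma esymm_eq_multiset_esymm (k m : ℕ) (x : ℕ → ℝ) :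
    esymm k m x = ((Icc 1 k).val.map x).esymm m :=
  (Finset.esymm_map_val x _ m).symm

lemma card_map_Icc_one (k : ℕ) (x : ℕ → ℝ) : Multiset.card ((Icc 1 k).val.map x) = k := by
  simp

lemma prod_X_sub_C_eq_sum_esymm (k : ℕ) (x : ℕ → ℝ) :
    ∏ i ∈ Icc 1 k, (X - C (x i)) =
      ∑ m ∈ range (k + 1), C ((-1) ^ m * esymm k m x) * X ^ (k - m) := by
  rw [prod_X_sub_C_eq_multiset_prod, Multiset.prod_X_sub_X_eq_sum_esymm, card_map_Icc_one]
  refine sum_congr rfl fun m _ => ?_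
  rw [esymm_eq_multiset_esymm, C_mul, C_pow, C_neg, C_1, mul_assoc]

lemma coeff_prod_X_sub_C (k : ℕ) (x : ℕ → ℝ) {n : ℕ} (hn : n ≤ k) :
    (∏ i ∈ Icc 1 k, (X - C (x i))).coeff n = (-1) ^ (k - n) * esymm k (k - n) x := by
  rw [prod_X_sub_C_eq_multiset_prod, Multiset.prod_X_sub_C_coeff _ (by rwa [card_map_Icc_one]),
    card_map_Icc_one, esymm_eq_multiset_esymm]

lemma natDegree_prod_X_sub_C (k : ℕ) (x : ℕ → ℝ) :
    (∏ i ∈ Icc 1 k, (X - C (x i))).natDegree = k := by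
  rw [natDegree_prod _ _ fun i _ => X_sub_C_ne_zero (x i)]
  simp

lemma Bmat_succ_eq_coeff (k : ℕ) (x : ℕ → ℝ) {i : ℕ} (hi : 1 ≤ i) (a : ℕ) :
    Bmat k x i (a + 1) = (X ^ (i - 1) * ∏ i ∈ Icc 1 k, (X - C (x i))).coeff a := by
  rw [coeff_X_pow_mul', Bmat]
  by_cases hrow : i ≤ a + 1
  · by_cases hband : a + 1 ≤ i + k
    · rw [if_pos ⟨hrow, hband⟩, if_pos (by omega), coeff_prod_X_sub_C k x (by omega),
        show k + i - (a + 1) = k - (a - (i - 1)) by omega]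
    · rw [if_neg (by omega), if_pos (by omega), coeff_eq_zero_of_natDegree_lt]
      rw [natDegree_prod_X_sub_C]
      omega
  · rw [if_neg (by omega), if_neg (by omega)]

lemma sum_Icc_one_eq_sum_range {M : Type*} [AddCommMonoid M] (F : ℕ → M) (n : ℕ) :
    ∑ l ∈ Icc 1 n, F l = ∑ a ∈ range n, F (a + 1) := by
  rw [range_eq_Ico, sum_Ico_add' F 0 n 1]
  rfl

theorem stmt_3_general (k d : ℕ) (hkd : k < d) (γ : ℕ → ℝ) (x : ℕ → ℝ)
    (f : Polynomial ℝ) (hf : f = ∏ i ∈ Finset.Icc 1 k, (X - C (x i)))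
    (i j : ℕ) (hi1 : 1 ≤ i) (hi2 : i ≤ d - k + 1) (hj1 : 1 ≤ j) (hj2 : j ≤ d - k + 1) :
    (∑ l ∈ Finset.Icc 1 (d + 1), ∑ l' ∈ Finset.Icc 1 (d + 1),
        Bmat k x i l * γ (l + l' - 2) * Bmat k x j l') =
      ∑ m ∈ Finset.range (k + 1),
        (-1 : ℝ) ^ m * esymm k m x * locMat γ (X ^ (k - m) * f) i j := by
  have hdeg : ∀ n, n + k ≤ d → (X ^ n * f).natDegree < d + 1 := fun n hn => by
    rw [hf, natDegree_X_pow_mul (hp := prod_ne_zero_iff.mpr fun i _ => X_sub_C_ne_zero (x i)),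
      natDegree_prod_X_sub_C]
    omega
  calc _ = ∑ a ∈ range (d + 1), ∑ b ∈ range (d + 1),
        (X ^ (i - 1) * f).coeff a * γ (a + b) * (X ^ (j - 1) * f).coeff b := by
        simp only [sum_Icc_one_eq_sum_range, Bmat_succ_eq_coeff k x hi1,
          Bmat_succ_eq_coeff k x hj1, hf, show ∀ a b : ℕ, a + 1 + (b + 1) - 2 = a + b by omega]
    _ = riesz γ (X ^ (i - 1) * f * (X ^ (j - 1) * f)) :=
        (riesz_mul_eq_sum γ _ _ (hdeg _ (by omega)) (hdeg _ (by omega))).symm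
    _ = locMat γ (f * f) i j := by
        rw [locMat, show i + j - 2 = (i - 1) + (j - 1) by omega, pow_add]
        ring_nf
    _ = _ := by
        rw [sum_mul_locMat]
        nth_rewrite 1 [hf, prod_X_sub_C_eq_sum_esymm]
        simp only [sum_mul, mul_assoc]

/-- Entrywise statement of `B_k M_d B_kᵀ = ∑_{i=0}^{k} (-1)^i e_i H_{x^{k-i} f}(d-k)`. -/
theorem stmt_3 (k d : ℕ) (hk : 1 ≤ k) (hkd : k < d) (γ : ℕ → ℝ) (x : ℕ → ℝ)
    (hdist : Set.InjOn x (Set.Icc 1 k))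
    (f : Polynomial ℝ) (hf : f = ∏ i ∈ Finset.Icc 1 k, (X - C (x i)))
    (i j : ℕ) (hi1 : 1 ≤ i) (hi2 : i ≤ d - k + 1) (hj1 : 1 ≤ j) (hj2 : j ≤ d - k + 1) :
    (∑ l ∈ Finset.Icc 1 (d + 1), ∑ l' ∈ Finset.Icc 1 (d + 1),
        Bmat k x i l * γ (l + l' - 2) * Bmat k x j l') =
      ∑ m ∈ Finset.range (k + 1),
        (-1 : ℝ) ^ m * esymm k m x * locMat γ (X ^ (k - m) * f) i j :=
  stmt_3_general k d hkd γ x f hf i j hi1 hi2 hj1 hj2
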